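/- For every x ∈ H^s, ‖μ^N(x) − μ(x)‖_s → 0 as N → ∞. -/

import Mathlib

open MeasureTheory ProbabilityTheory Real Filter
open scoped ENNReal NNReal Topology

noncomputable section

/-- The model space for every Sobolev-like space `H^r`: the Hilbert space `ℓ²(ℕ; ℝ)`.
An element `u : Hsp`, viewed as a point of `H^r`, represents the sequence
`(x_j)_{j ≥ 1}` with `x_{j+1} = (j+1)^{-r} * u j` (so that `‖u‖ = ‖x‖_r`,
and the indices are shifted by one: `j : ℕ` stands for the coordinate `j+1 ≥ 1`). -/
abbrev Hsp : Type := lp (fun _ : ℕ => ℝ) 2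

/-- the weight `(j+1)^r`. -/
def wt (r : ℝ) (j : ℕ) : ℝ := ((j : ℝ) + 1) ^ r

/-- the coordinates of `u : Hsp` viewed as an element of `H^r`. -/
def seqr (r : ℝ) (u : Hsp) (j : ℕ) : ℝ := wt (-r) j * u j

/-- the `H^r` norm of a raw sequence. -/
def rnorm (r : ℝ) (a : ℕ → ℝ) : ℝ := (∑' j, wt (2 * r) j * a j ^ 2) ^ ((1 : ℝ) / 2)

theorem memℓp_of_eventually_zero (f : ℕ → ℝ) (N : ℕ) (hf : ∀ j, N ≤ j → f j = 0) :
    Memℓp f 2 := by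
  apply memℓp_gen
  apply summable_of_ne_finset_zero (s := Finset.range N)
  intro j hj
  rw [Finset.mem_range, not_lt] at hj
  rw [hf j hj]
  simp [Real.zero_rpow]

/-- embedding of `X^N ≅ ℝ^N` into `Hsp`, viewing `x : Fin N → ℝ` as the element of `H^s`
whose `(i+1)`-th coordinate is `x i` for `i < N` and `0` beyond. -/
def ofX (s : ℝ) (N : ℕ) (x : Fin N → ℝ) : Hsp :=
  ⟨fun j => if h : j < N then wt s j * x ⟨j, h⟩ else 0,
   memℓp_of_eventually_zero _ N (fun j hj => dif_neg (Nat.not_lt.mpr hj))⟩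

/-- the projection `P^N` (truncation of all coordinates beyond the `N`-th). -/
def PNproj (N : ℕ) (u : Hsp) : Hsp :=
  ⟨fun j => if j < N then u j else 0, by
    apply memℓp_gen
    refine Summable.of_nonneg_of_le (fun j => ?_) (fun j => ?_)
      ((lp.memℓp u).summable (by norm_num))
    · positivity
    · by_cases h : j < N <;> simp [h] <;> positivity⟩

/-!
Multiplying the `j`-th coordinate by `(j+1)^s` turns the `H^s` norm of `μ^N(x) - μ(x)` into the
`ℓ²` norm of `y - P^N y_N`, where `y_N = x + A ∇Ψ(P^N x)`, `y = x + A ∇Ψ(x)` and `A` is the diagonal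
operator with entries `λ_j² (j+1)^{2s} ≤ c₊²` (bounded because `s ≤ κ`). The gradient is the Riesz
representative of the continuous map `DΨ`, hence continuous, so `y_N → y`; as `P^N` is a contraction
converging strongly to the identity, `P^N y_N → y`.
-/

open InnerProductSpace

lemma wt_add (a b : ℝ) (j : ℕ) : wt (a + b) j = wt a j * wt b j :=
  Real.rpow_add (by positivity) a b

lemma wt_mul_wt_neg (r : ℝ) (j : ℕ) : wt r j * wt (-r) j = 1 := by
  rw [← wt_add, add_neg_cancel, wt, Real.rpow_zero]

lemma wt_sq (r : ℝ) (j : ℕ) : wt r j ^ 2 = wt (2 * r) j := by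
  rw [two_mul, wt_add, sq]

lemma wt_le_one {r : ℝ} (hr : r ≤ 0) (j : ℕ) : wt r j ≤ 1 :=
  Real.rpow_le_one_of_one_le_of_nonpos (by simp) hr

lemma norm_sq_mul_wt_le {l c κ s : ℝ} {j : ℕ} (hl₀ : 0 ≤ l) (hl : l ≤ c * wt (-κ) j) (hs : s ≤ κ) :
    ‖l ^ 2 * wt (2 * s) j‖ ≤ c ^ 2 := by
  have hwt : 0 ≤ wt (2 * s) j := by unfold wt; positivity
  calc ‖l ^ 2 * wt (2 * s) j‖ = l ^ 2 * wt (2 * s) j := by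
        rw [Real.norm_of_nonneg (by positivity)]
    _ ≤ (c * wt (-κ) j) ^ 2 * wt (2 * s) j := by gcongr
    _ = c ^ 2 * wt (2 * (s - κ)) j := by
        rw [mul_pow, wt_sq, mul_assoc, ← wt_add]; ring_nf
    _ ≤ c ^ 2 := mul_le_of_le_one_right (sq_nonneg c) (wt_le_one (by linarith) j)

lemma rnorm_eq_norm {r : ℝ} {a : ℕ → ℝ} {u : Hsp} (hu : ∀ j, u j = wt r j * a j) :
    rnorm r a = ‖u‖ := by
  have h2 : (0 : ℝ) < (2 : ℝ≥0∞).toReal := by norm_num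
  rw [rnorm, lp.norm_eq_tsum_rpow h2]
  simp only [ENNReal.toReal_ofNat, Real.rpow_two, Real.norm_eq_abs, sq_abs, hu, mul_pow, wt_sq]

lemma tsum_seqr_neg_mul_seqr (r : ℝ) (u v : Hsp) :
    ∑' j, seqr (-r) u j * seqr r v j = ⟪u, v⟫_ℝ := by
  rw [lp.inner_eq_tsum]
  congr 1 with j
  rw [seqr, seqr, neg_neg, Real.inner_apply]
  linear_combination (u j * v j) * wt_mul_wt_neg r j

lemma continuous_of_apply_eq_inner {X E : Type*} [TopologicalSpace X] [NormedAddCommGroup E]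
    [InnerProductSpace ℝ E] {G : X → E} {D : X → StrongDual ℝ E} (hD : Continuous D)
    (hG : ∀ x v, D x v = ⟪G x, v⟫_ℝ) : Continuous G := by
  have hDG : D = toDualMap ℝ E ∘ G := funext fun x => ContinuousLinearMap.ext (hG x)
  rw [hDG] at hD
  exact (toDualMap ℝ E).isometry.isUniformInducing.isInducing.continuous_iff.mpr hD

def diagMul (a : ℕ → ℝ) {C : ℝ} (ha : ∀ j, ‖a j‖ ≤ C) : Hsp →L[ℝ] Hsp :=
  LinearMap.mkContinuous
    { toFun := fun u => ⟨fun j => a j * u j, (lp.memℓp (C • u)).mono' fun j => by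
          rw [lp.coeFn_smul, Pi.smul_apply, smul_eq_mul, norm_mul, norm_mul]
          exact mul_le_mul_of_nonneg_right ((ha j).trans (le_abs_self C)) (norm_nonneg _)⟩
      map_add' := fun u v => by
        ext j
        show a j * (u + v) j = a j * u j + a j * v j
        rw [lp.coeFn_add, Pi.add_apply, mul_add]
      map_smul' := fun c u => by
        ext j
        show a j * (c • u) j = c * (a j * u j)
        rw [lp.coeFn_smul, Pi.smul_apply, smul_eq_mul, mul_left_comm] }
    C fun u => by
      have hC : 0 ≤ C := (norm_nonneg _).trans (ha 0)
      calc _ ≤ ‖C • u‖ := lp.norm_mono two_ne_zero fun j => ?_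
        _ = C * ‖u‖ := by rw [norm_smul, Real.norm_of_nonneg hC]
      show ‖a j * u j‖ ≤ ‖(C • u) j‖
      rw [lp.coeFn_smul, Pi.smul_apply, smul_eq_mul, norm_mul, norm_mul, Real.norm_of_nonneg hC]
      exact mul_le_mul_of_nonneg_right (ha j) (norm_nonneg _)

lemma diagMul_apply (a : ℕ → ℝ) {C : ℝ} (ha : ∀ j, ‖a j‖ ≤ C) (u : Hsp) (j : ℕ) :
    diagMul a ha u j = a j * u j := rfl

lemma PNproj_apply (N : ℕ) (u : Hsp) (j : ℕ) : PNproj N u j = if j < N then u j else 0 := rfl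

lemma PNproj_sub (N : ℕ) (u v : Hsp) : PNproj N u - PNproj N v = PNproj N (u - v) := by
  ext j
  by_cases hj : j < N <;> simp [PNproj_apply, hj]

lemma norm_PNproj_le (N : ℕ) (u : Hsp) : ‖PNproj N u‖ ≤ ‖u‖ :=
  lp.norm_mono two_ne_zero fun j => by
    by_cases hj : j < N <;> simp [PNproj_apply, hj]

lemma dist_PNproj_le (N : ℕ) (u v : Hsp) : dist (PNproj N u) (PNproj N v) ≤ dist u v := by
  simpa only [dist_eq_norm, PNproj_sub] using norm_PNproj_le N (u - v)

lemma sum_range_single_eq_PNproj (N : ℕ) (u : Hsp) :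
    ∑ i ∈ Finset.range N, lp.single 2 i (u i) = PNproj N u := by
  ext j
  rw [lp.coeFn_sum, Finset.sum_apply]
  simp [lp.single_apply, PNproj_apply, Pi.single_apply]

lemma tendsto_PNproj (u : Hsp) : Tendsto (fun N => PNproj N u) atTop (𝓝 u) := by
  simpa only [sum_range_single_eq_PNproj] using
    (lp.hasSum_single ENNReal.ofNat_ne_top u).tendsto_sum_nat

lemma Filter.Tendsto.PNproj {f : ℕ → Hsp} {u : Hsp} (hf : Tendsto f atTop (𝓝 u)) :
    Tendsto (fun N => PNproj N (f N)) atTop (𝓝 u) :=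
  (tendsto_PNproj u).congr_dist <| squeeze_zero (fun _ => dist_nonneg)
    (fun N => dist_PNproj_le N u (f N))
    (tendsto_iff_dist_tendsto_zero.mp hf |>.congr fun _ => dist_comm _ _)

lemma rnorm_truncated_drift_sub (lam : ℕ → ℝ) {C s : ℝ} (ha : ∀ j, ‖lam j ^ 2 * wt (2 * s) j‖ ≤ C)
    (N : ℕ) (x g gN : Hsp) :
    rnorm s (fun j =>
        (-((if j < N then seqr s x j else 0)
            + (if j < N then lam j ^ 2 * seqr (-s) gN j else 0)))
        - (-(seqr s x j + lam j ^ 2 * seqr (-s) g j)))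
      = ‖PNproj N (x + diagMul _ ha gN) - (x + diagMul _ ha g)‖ := by
  rw [norm_sub_rev]
  refine rnorm_eq_norm fun j => ?_
  rw [lp.coeFn_sub, Pi.sub_apply, PNproj_apply]
  simp only [lp.coeFn_add, Pi.add_apply, diagMul_apply, seqr, neg_neg, ← wt_sq]
  by_cases hj : j < N
  · simp only [if_pos hj]
    ring
  · simp only [if_neg hj]
    linear_combination (-x j) * wt_mul_wt_neg s j

theorem statement_5_general (lam : ℕ → ℝ) (κ cminus cplus s : ℝ) (Ψ : Hsp → ℝ) (gradΨ : Hsp → Hsp)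
    (hlampos : ∀ j : ℕ, 0 < lam j)
    (hlam : ∀ j : ℕ, cminus * wt (-κ) j ≤ lam j ∧ lam j ≤ cplus * wt (-κ) j)
    (hsκ : s < κ - 1/2)
    (hΨdiff2 : Differentiable ℝ (fderiv ℝ Ψ))
    (hgradrep : ∀ x h : Hsp, fderiv ℝ Ψ x h = ∑' j, seqr (-s) (gradΨ x) j * seqr s h j):
    ∀ x : Hsp,
      Tendsto (fun N : ℕ =>
          rnorm s (fun j =>
            (-((if j < N then seqr s x j else 0)
                + (if j < N then lam j ^ 2 * seqr (-s) (gradΨ (PNproj N x)) j else 0)))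
            - (-(seqr s x j + lam j ^ 2 * seqr (-s) (gradΨ x) j))))
        atTop (𝓝 0) := by
  intro x
  have ha : ∀ j, ‖lam j ^ 2 * wt (2 * s) j‖ ≤ cplus ^ 2 := fun j =>
    norm_sq_mul_wt_le (hlampos j).le (hlam j).2 (by linarith)
  have hgrad : Continuous gradΨ := continuous_of_apply_eq_inner hΨdiff2.continuous
    fun x h => (hgradrep x h).trans (tsum_seqr_neg_mul_seqr s _ _)
  have hy : Tendsto (fun N => x + diagMul _ ha (gradΨ (PNproj N x))) atTop
      (𝓝 (x + diagMul _ ha (gradΨ x))) :=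
    tendsto_const_nhds.add <|
      ((diagMul _ ha).continuous.tendsto _).comp ((hgrad.tendsto x).comp (tendsto_PNproj x))
  simpa only [rnorm_truncated_drift_sub lam ha] using
    tendsto_iff_norm_sub_tendsto_zero.mp hy.PNproj

theorem statement_5 (lam : ℕ → ℝ) (κ cminus cplus s : ℝ) (Ψ : Hsp → ℝ) (gradΨ : Hsp → Hsp)
    (M₁ M₂ M₃ M₄ : ℝ)
    (hκ : 1/2 < κ) (hcminus : 0 < cminus) (hcpm : cminus ≤ cplus)
    (hlampos : ∀ j : ℕ, 0 < lam j)
    (hlam : ∀ j : ℕ, cminus * wt (-κ) j ≤ lam j ∧ lam j ≤ cplus * wt (-κ) j)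
    (hs0 : 0 ≤ s) (hsκ : s < κ - 1/2)
    (hΨdiff : Differentiable ℝ Ψ) (hΨdiff2 : Differentiable ℝ (fderiv ℝ Ψ))
    (hgradrep : ∀ x h : Hsp, fderiv ℝ Ψ x h = ∑' j, seqr (-s) (gradΨ x) j * seqr s h j)
    (hΨlb : ∀ x : Hsp, M₁ ≤ Ψ x) (hΨub : ∀ x : Hsp, Ψ x ≤ M₂ * (1 + ‖x‖ ^ 2))
    (hgradb : ∀ x : Hsp, ‖gradΨ x‖ ≤ M₃ * (1 + ‖x‖))
    (hhessb : ∀ x : Hsp, ‖fderiv ℝ (fderiv ℝ Ψ) x‖ ≤ M₄):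
    ∀ x : Hsp,
      Tendsto (fun N : ℕ =>
          rnorm s (fun j =>
            (-((if j < N then seqr s x j else 0)
                + (if j < N then lam j ^ 2 * seqr (-s) (gradΨ (PNproj N x)) j else 0)))
            - (-(seqr s x j + lam j ^ 2 * seqr (-s) (gradΨ x) j))))
        atTop (𝓝 0) :=
  statement_5_general lam κ cminus cplus s Ψ gradΨ hlampos hlam hsκ hΨdiff2 hgradrep

end
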